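/- If ψ and φ are unit vectors with 0 < |⟨ψ,φ⟩| < 1, then there is no isometry V : H → H ⊗ H with V ψ = ψ ⊗ ψ and V φ = φ ⊗ φ. -/

import Mathlib

/-- Concrete tensor product of two Euclidean vectors. -/
def tp {n : ℕ} (x y : EuclideanSpace ℂ (Fin n)) : EuclideanSpace ℂ (Fin n × Fin n) :=
  WithLp.toLp 2 (fun p : Fin n × Fin n => x p.1 * y p.2)

lemma tp_inner {n : ℕ} (x y : EuclideanSpace ℂ (Fin n)) :
    @inner ℂ _ _ (tp x x) (tp y y) = (@inner ℂ _ _ x y) ^ 2 := by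
  simp only [EuclideanSpace.inner_eq_star_dotProduct]
  simp [dotProduct, tp, Fintype.sum_prod_type, Finset.sum_mul_sum, sq,
    Finset.mul_sum, Finset.sum_mul]
  ring_nf
  congr 1
  ext i
  congr 1
  ext j
  ring

/-- If `ψ, φ` are unit vectors with `0 < |⟨ψ,φ⟩| < 1`, there is no isometry
(inner-product-preserving linear map) `V : H → H ⊗ H` with `V ψ = ψ ⊗ ψ` and
`V φ = φ ⊗ φ`. -/
theorem no_isometry_cloning_two_nonorthogonal_states
    {n : ℕ} (ψ φ : EuclideanSpace ℂ (Fin n)) (hψ : ‖ψ‖ = 1) (hφ : ‖φ‖ = 1)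
    (hlo : 0 < ‖(@inner ℂ _ _ ψ φ)‖)
    (hhi : ‖(@inner ℂ _ _ ψ φ)‖ < 1) :
    ¬ ∃ V : EuclideanSpace ℂ (Fin n) →ₗ[ℂ] EuclideanSpace ℂ (Fin n × Fin n),
        (∀ x y, @inner ℂ _ _ (V x) (V y) = @inner ℂ _ _ x y) ∧
        V ψ = tp ψ ψ ∧ V φ = tp φ φ := by
  rintro ⟨V, hiso, hVψ, hVφ⟩
  have h := hiso ψ φ
  rw [hVψ, hVφ, tp_inner] at h
  set c := @inner ℂ _ _ ψ φ
  have habs : ‖c‖ ^ 2 = ‖c‖ := by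
    rw [← norm_pow, h]
  nlinarith [hlo, hhi]
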